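/- arXiv:1806.04604 — 6 statements merged into one kernel-verified Lean document; each statement's English description precedes it below -/
import Mathlib

section
/- For a row-finite matrix A over the max-plus semiring and a finite coefficient g, the row-definite form of A with respect to g, defined by (_gĀ)(k, j) = max over all i with g i = k of (A(i,j) - A(i, g i)) (and -∞ if no such i exists), equals the max-plus matrix product A_g^c ⊗ A, where A_g is the region matrix of A w.r.t. g and A_g^c its conjugate. -/
open scoped BigOperators

/-- Max-plus matrix product over `EReal = ℝ ∪ {±∞}` (we use only `ℝ ∪ {-∞}`). -/
noncomputable def mmul {n : ℕ} (A B : Fin n → Fin n → EReal) : Fin n → Fin n → EReal :=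
  fun i j => ⨆ k, A i k + B k j

/-- Region matrix `A_g`: keeps the entry `A i (g i)` in each row `i`. -/
noncomputable def region {n : ℕ} (A : Fin n → Fin n → EReal) (g : Fin n → Fin n) :
    Fin n → Fin n → EReal :=
  fun i j => if j = g i then A i j else ⊥

/-- Conjugate matrix: `B^c(i,j) = -B(j,i)` when finite, `-∞` otherwise. -/
noncomputable def mconj {n : ℕ} (B : Fin n → Fin n → EReal) : Fin n → Fin n → EReal :=
  fun i j => if B j i = ⊥ then ⊥ else -B j i

/-- Max-plus identity matrix. -/
noncomputable def Imat {n : ℕ} : Fin n → Fin n → EReal :=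
  fun i j => if i = j then 0 else ⊥

/-- The set of points of `ℝ^n` described by a DBM `D` (constraints `x i - x j ≥ D i j`,
`-∞` bounds being vacuous). -/
def dbmSet {n : ℕ} (D : Fin n → Fin n → EReal) : Set (Fin n → ℝ) :=
  {x | ∀ i j, D i j ≤ ((x i - x j : ℝ) : EReal)}

/-- the row-definite form of a row-finite max-plus matrix `A` w.r.t.
a finite coefficient `g` equals `A_g^c ⊗ A`. -/
theorem row_definite_eq_mmul {n : ℕ} (A : Fin n → Fin n → EReal)
    (hrow : ∀ i, ∃ j, A i j ≠ ⊥) (htop : ∀ i j, A i j ≠ ⊤)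
    (g : Fin n → Fin n) (hg : ∀ i, A i (g i) ≠ ⊥) :
    ∀ k j, (⨆ i : {i : Fin n // g i = k}, (A i j - A (i : Fin n) (g i)))
      = mmul (mconj (region A g)) A k j := by
  intro k j
  rw [iSup_subtype]
  unfold mmul mconj region
  refine iSup_congr fun i => ?_
  by_cases h : g i = k
  · rw [iSup_pos h]
    simp only [h.symm, if_pos rfl, if_true, if_neg (hg i)]
    rw [sub_eq_add_neg, add_comm]
  · rw [iSup_neg h]
    rw [if_neg (fun hk : k = g i => h hk.symm), if_pos rfl, EReal.bot_add]
end

section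
/- Let D be a DBM in ℝ^n (set {x ∈ ℝ^n : x_i - x_j ≥ D(i,j) ∀ i,j}) contained in the region R_g of a row-finite max-plus matrix A with finite coefficient g, and suppose the affine dynamics are x'_i = x_{g i} + A(i, g i). If D is in canonical form (tightest bounds: D(i,j) = sup {x_i - x_j : x ∈ D} for all i,j with D nonempty), then the image {x' ∈ ℝ^n : ∃ x ∈ D, x'_i = x_{g i} + A(i, g i) ∀ i} equals the DBM D' with D'(i,j) = D(g i, g j) + A(i, g i) - A(j, g j). -/
/-!
Writing `a i = A(i, g i)`, the point `y` satisfies the shifted bounds exactly when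
`z = y - a` satisfies `D(g i, g j) ≤ z i - z j`, so the theorem says that every such partial
assignment `x (g i) = z i` extends to a point of `D`. Canonicity gives the triangle inequality
and a nonnegative diagonal, and then the pointwise maximum of the columns `z p + D(·, g p)`,
made finite by a translate of some point of `D` low enough not to change the coordinates
`g p`, is such an extension.
-/

open scoped BigOperators

namespace DBM

lemma add_coe_sub_coe_le_coe_iff {d : EReal} {r s t : ℝ} :
    d + r - s ≤ t ↔ d ≤ ((t - r + s : ℝ) : EReal) := by
  rw [EReal.sub_le_iff_le_add (.inl (EReal.coe_ne_bot s)) (.inl (EReal.coe_ne_top s)),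
    ← EReal.le_sub_iff_add_le (.inl (EReal.coe_ne_bot r)) (.inl (EReal.coe_ne_top r))]
  norm_cast
  ring_nf

def Satisfies {σ : Type*} (D : σ → σ → EReal) (X : σ → EReal) : Prop :=
  ∀ i j, D i j + X j ≤ X i

lemma mem_dbmSet_iff_satisfies {n : ℕ} {D : Fin n → Fin n → EReal} {x : Fin n → ℝ} :
    x ∈ dbmSet D ↔ Satisfies D fun i => (x i : EReal) := by
  refine forall₂_congr fun i j => ?_
  rw [EReal.coe_sub,
    EReal.le_sub_iff_add_le (.inl (EReal.coe_ne_bot _)) (.inl (EReal.coe_ne_top _))]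

lemma satisfies_add_column {σ : Type*} {D : σ → σ → EReal}
    (htri : ∀ i j k, D i j + D j k ≤ D i k) (v : EReal) (k : σ) :
    Satisfies D fun i => v + D i k := fun i j => by
  rw [add_left_comm]
  exact add_le_add_right (htri i j k) v

lemma Satisfies.iSup {σ κ : Type*} [Finite κ] [Nonempty κ] {D : σ → σ → EReal}
    {X : κ → σ → EReal} (hX : ∀ p, Satisfies D (X p)) :
    Satisfies D fun i => ⨆ p, X p i := fun i j => by
  show D i j + ⨆ p, X p j ≤ ⨆ p, X p i
  obtain ⟨p, hp⟩ := exists_eq_ciSup_of_finite (f := fun p => X p j)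
  rw [← hp]
  exact (hX p i j).trans (le_iSup (fun p => X p i) p)

variable {n : ℕ} {D : Fin n → Fin n → EReal}

def IsCanonical (D : Fin n → Fin n → EReal) : Prop :=
  ∀ i j, (⨅ x ∈ dbmSet D, ((x i - x j : ℝ) : EReal)) = D i j

lemma IsCanonical.add_le (hD : IsCanonical D) (i j k : Fin n) : D i j + D j k ≤ D i k := by
  rw [← hD i k]
  refine le_iInf₂ fun x hx => ?_
  calc D i j + D j k ≤ ((x i - x j : ℝ) : EReal) + ((x j - x k : ℝ) : EReal) :=
        add_le_add (hx i j) (hx j k)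
    _ = ((x i - x k : ℝ) : EReal) := by rw [← EReal.coe_add, sub_add_sub_cancel]

lemma IsCanonical.diag_nonneg (hD : IsCanonical D) (i : Fin n) : 0 ≤ D i i := by
  rw [← hD i i]
  exact le_iInf₂ fun x _ => by simp

theorem exists_mem_dbmSet_comp_eq {ι : Type*} [Finite ι]
    (htri : ∀ i j k, D i j + D j k ≤ D i k) (hdiag : ∀ i, 0 ≤ D i i)
    (hne : (dbmSet D).Nonempty) (g : ι → Fin n) (z : ι → ℝ)
    (hz : ∀ p q, D (g p) (g q) ≤ ((z p - z q : ℝ) : EReal)) :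
    ∃ x ∈ dbmSet D, ∀ p, x (g p) = z p := by
  obtain ⟨w, hw⟩ := hne
  obtain ⟨c, hc⟩ := Finite.exists_ge fun p => z p - w (g p)
  let gen : Option ι → Fin n → EReal := fun q i =>
    q.elim ((w i + c : ℝ) : EReal) fun p => (z p : EReal) + D i (g p)
  have hgen : ∀ q, Satisfies D (gen q)
    | none => mem_dbmSet_iff_satisfies.1 fun i j => by
        simpa only [add_sub_add_right_eq_sub] using hw i j
    | some p => satisfies_add_column htri _ _
  have hgen_ne_top : ∀ q i, gen q i ≠ ⊤
    | none, _ => EReal.coe_ne_top _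
    | some p, i => EReal.add_ne_top (EReal.coe_ne_top _)
        (ne_top_of_le_ne_top (EReal.coe_ne_top _) (hw i (g p)))
  let X : Fin n → EReal := fun i => ⨆ q, gen q i
  have hX_coe : ∀ i, ((X i).toReal : EReal) = X i := fun i => by
    obtain ⟨q, hq⟩ := exists_eq_ciSup_of_finite (f := fun q => gen q i)
    refine EReal.coe_toReal ?_ (ne_bot_of_le_ne_bot (EReal.coe_ne_bot _) (le_iSup (gen · i) none))
    simpa only [X, ← hq] using hgen_ne_top q i
  have hX_comp : ∀ p, X (g p) = z p := fun p => by
    refine le_antisymm (iSup_le ?_) (le_iSup_of_le (some p) ?_)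
    · rintro (_ | q)
      · exact EReal.coe_le_coe_iff.2 (by linarith [hc p])
      · calc (z q : EReal) + D (g p) (g q) ≤ (z q : EReal) + ((z p - z q : ℝ) : EReal) :=
              add_le_add_right (hz p q) _
          _ = z p := by rw [← EReal.coe_add, add_sub_cancel]
    · exact le_add_of_nonneg_right (hdiag (g p))
  refine ⟨fun i => (X i).toReal, ?_, fun p => by simp [hX_comp]⟩
  rw [mem_dbmSet_iff_satisfies]
  simpa only [hX_coe] using Satisfies.iSup hgen

end DBM

theorem image_of_canonical_dbm_general {n : ℕ} (A : Fin n → Fin n → EReal)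
    (htop : ∀ i j, A i j ≠ ⊤)
    (g : Fin n → Fin n) (hg : ∀ i, A i (g i) ≠ ⊥)
    (D : Fin n → Fin n → EReal)
    (hne : (dbmSet D).Nonempty)
    (hcanon : ∀ i j, (⨅ x ∈ dbmSet D, ((x i - x j : ℝ) : EReal)) = D i j) :
    {y : Fin n → ℝ | ∃ x ∈ dbmSet D, ∀ i, (y i : EReal) = (x (g i) : EReal) + A i (g i)} =
      dbmSet (fun i j => D (g i) (g j) + A i (g i) - A j (g j)) := by
  set a : Fin n → ℝ := fun i => (A i (g i)).toReal
  have hA : ∀ i, A i (g i) = a i := fun i => (EReal.coe_toReal (htop i (g i)) (hg i)).symm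
  ext y
  have hshift : ∀ i j, D (g i) (g j) + a i - a j ≤ ((y i - y j : ℝ) : EReal) ↔
      D (g i) (g j) ≤ (((y i - a i) - (y j - a j) : ℝ) : EReal) := fun i j => by
    rw [DBM.add_coe_sub_coe_le_coe_iff]
    ring_nf
  simp only [Set.mem_ofPred_eq, dbmSet, hA, hshift, ← EReal.coe_add, EReal.coe_eq_coe_iff,
    ← sub_eq_iff_eq_add (b := a _)]
  constructor
  · rintro ⟨x, hx, hxy⟩ i j
    rw [hxy i, hxy j]
    exact hx _ _
  · intro hy
    obtain ⟨x, hx, hxy⟩ := DBM.exists_mem_dbmSet_comp_eq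
      (DBM.IsCanonical.add_le hcanon) (DBM.IsCanonical.diag_nonneg hcanon) hne g
      (fun i => y i - a i) hy
    exact ⟨x, hx, fun i => (hxy i).symm⟩

/-- the image of a canonical DBM `D` contained in `R_g` under the
affine dynamics `x'_i = x_{g i} + A(i, g i)` is the DBM
`D'(i,j) = D(g i, g j) + A(i, g i) - A(j, g j)`. -/
theorem image_of_canonical_dbm {n : ℕ} (A : Fin n → Fin n → EReal)
    (hrow : ∀ i, ∃ j, A i j ≠ ⊥) (htop : ∀ i j, A i j ≠ ⊤)
    (g : Fin n → Fin n) (hg : ∀ i, A i (g i) ≠ ⊥)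
    (D : Fin n → Fin n → EReal)
    (hsub : dbmSet D ⊆
      {x : Fin n → ℝ | ∀ i j, A i j - A i (g i) ≤ ((x (g i) - x j : ℝ) : EReal)})
    (hne : (dbmSet D).Nonempty)
    (hcanon : ∀ i j, (⨅ x ∈ dbmSet D, ((x i - x j : ℝ) : EReal)) = D i j) :
    {y : Fin n → ℝ | ∃ x ∈ dbmSet D, ∀ i, (y i : EReal) = (x (g i) : EReal) + A i (g i)} =
      dbmSet (fun i j => D (g i) (g j) + A i (g i) - A j (g j)) :=
  image_of_canonical_dbm_general A htop g hg D hne hcanon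
end

section
/- Let A be a row-finite max-plus matrix with finite coefficient g and affine dynamics x'_i = x_{g i} + A(i, g i). The inverse image of a DBM D' (the set {x ∈ ℝ^n : A_g ⊗ x ∈ set(D')}) equals the set of the DBM D defined by D(k,l) = max over pairs (i,j) with g i = k and g j = l of (D'(i,j) + A(j, g j) - A(i, g i)), taking D(k,l) = -∞ when no such pair exists, and additionally D(k,k) ≥ 0 replaced by D(k,k) = max(previous value, 0) on the diagonal; equivalently D = (A_g^c ⊗ D' ⊗ A_g) ⊕ I_n. -/
open scoped BigOperators

/-! Each row `i` of `A_g` has a single finite entry `a i = A i (g i)`, in column `g i`, so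
`(A_g^c ⊗ D' ⊗ A_g) k l ≤ c` unfolds to `D' i j ≤ c + a i - a j` for all `i ∈ g⁻¹ k`, `j ∈ g⁻¹ l`.
Taking `c = x k - x l` these are exactly the constraints on `A_g ⊗ x`; the term `I_n` only adds
the constraints `x k - x k ≥ 0`, which always hold. -/

lemma dbmSet_max_Imat {n : ℕ} (D : Fin n → Fin n → EReal) :
    dbmSet (fun k l => max (D k l) (Imat k l)) = dbmSet D := by
  ext x
  refine forall₂_congr fun k l => ?_
  rw [max_le_iff, and_iff_left_iff_imp]
  intro _
  unfold Imat
  split_ifs with hkl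
  · simp [hkl]
  · exact bot_le

lemma mmul_le_iff {n : ℕ} {B C : Fin n → Fin n → EReal} {k l : Fin n} {c : EReal} :
    mmul B C k l ≤ c ↔ ∀ m, B k m + C m l ≤ c :=
  iSup_le_iff

lemma EReal.coe_add_le_coe_iff (r s : ℝ) (y : EReal) :
    (r : EReal) + y ≤ s ↔ y ≤ ((s - r : ℝ) : EReal) := by
  rw [add_comm, EReal.coe_sub, EReal.le_sub_iff_add_le (.inl (EReal.coe_ne_bot r))
    (.inl (EReal.coe_ne_top r))]

section Region

variable {n : ℕ} {A : Fin n → Fin n → EReal} {g : Fin n → Fin n} {a : Fin n → ℝ}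

lemma region_apply_of_eq_coe (ha : ∀ i, A i (g i) = a i) (j l : Fin n) :
    region A g j l = if l = g j then (a j : EReal) else ⊥ := by
  unfold region
  split_ifs with h
  · rw [h, ha]
  · rfl

lemma mconj_region_apply_of_eq_coe (ha : ∀ i, A i (g i) = a i) (k i : Fin n) :
    mconj (region A g) k i = if k = g i then ((-a i : ℝ) : EReal) else ⊥ := by
  unfold mconj
  simp only [region_apply_of_eq_coe ha]
  split_ifs <;> simp_all

lemma mmul_mconj_region_le_coe_iff (ha : ∀ i, A i (g i) = a i)
    (M : Fin n → Fin n → EReal) (k l : Fin n) (c : ℝ) :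
    mmul (mconj (region A g)) M k l ≤ c ↔ ∀ i, g i = k → M i l ≤ ((c + a i : ℝ) : EReal) := by
  refine mmul_le_iff.trans (forall_congr' fun i => ?_)
  rw [mconj_region_apply_of_eq_coe ha]
  split_ifs with hk
  · rw [EReal.coe_add_le_coe_iff, sub_neg_eq_add]
    simp [hk]
  · simp [Ne.symm hk]

lemma mmul_region_le_coe_iff (ha : ∀ i, A i (g i) = a i)
    (M : Fin n → Fin n → EReal) (k l : Fin n) (c : ℝ) :
    mmul M (region A g) k l ≤ c ↔ ∀ j, g j = l → M k j ≤ ((c - a j : ℝ) : EReal) := by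
  refine mmul_le_iff.trans (forall_congr' fun j => ?_)
  rw [region_apply_of_eq_coe ha]
  split_ifs with hl
  · rw [add_comm, EReal.coe_add_le_coe_iff]
    simp [hl]
  · simp [Ne.symm hl]

lemma mmul_conj_region_le_coe_iff (ha : ∀ i, A i (g i) = a i)
    (D : Fin n → Fin n → EReal) (k l : Fin n) (c : ℝ) :
    mmul (mmul (mconj (region A g)) D) (region A g) k l ≤ c ↔
      ∀ i j, g i = k → g j = l → D i j ≤ ((c + a i - a j : ℝ) : EReal) := by
  simp only [mmul_region_le_coe_iff ha, mmul_mconj_region_le_coe_iff ha]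
  grind

lemma dbmSet_mmul_conj_region (ha : ∀ i, A i (g i) = a i) (D : Fin n → Fin n → EReal) :
    dbmSet (mmul (mmul (mconj (region A g)) D) (region A g)) =
      {x | ∀ i j, D i j ≤ ((x (g i) + a i - (x (g j) + a j) : ℝ) : EReal)} := by
  ext x
  simp only [dbmSet, Set.mem_ofPred_eq, mmul_conj_region_le_coe_iff ha]
  constructor
  · intro h i j
    exact (h (g i) (g j) i j rfl rfl).trans_eq (congrArg _ (by ring))
  · rintro h _ _ i j rfl rfl
    exact (h i j).trans_eq (congrArg _ (by ring))

end Region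

theorem inverse_image_dbm_general {n : ℕ} (A : Fin n → Fin n → EReal)
    (htop : ∀ i j, A i j ≠ ⊤)
    (g : Fin n → Fin n) (hg : ∀ i, A i (g i) ≠ ⊥)
    (D' : Fin n → Fin n → EReal) :
    {x : Fin n → ℝ | ∀ i j,
        D' i j ≤ ((x (g i) : EReal) + A i (g i)) - ((x (g j) : EReal) + A j (g j))} =
      dbmSet (fun k l =>
        max (mmul (mmul (mconj (region A g)) D') (region A g) k l) (Imat k l)) := by
  set a : Fin n → ℝ := fun i => (A i (g i)).toReal
  have ha : ∀ i, A i (g i) = a i := fun i => (EReal.coe_toReal (htop i (g i)) (hg i)).symm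
  rw [dbmSet_max_Imat, dbmSet_mmul_conj_region ha]
  simp only [ha]
  norm_cast

/-- the inverse image of a DBM `D'` under the affine dynamics
`x'_i = x_{g i} + A(i, g i)` is the DBM `(A_g^c ⊗ D' ⊗ A_g) ⊕ I_n`. -/
theorem inverse_image_dbm {n : ℕ} (A : Fin n → Fin n → EReal)
    (hrow : ∀ i, ∃ j, A i j ≠ ⊥) (htop : ∀ i j, A i j ≠ ⊤)
    (g : Fin n → Fin n) (hg : ∀ i, A i (g i) ≠ ⊥)
    (D' : Fin n → Fin n → EReal) :
    {x : Fin n → ℝ | ∀ i j,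
        D' i j ≤ ((x (g i) : EReal) + A i (g i)) - ((x (g j) : EReal) + A j (g j))} =
      dbmSet (fun k l =>
        max (mmul (mmul (mconj (region A g)) D') (region A g) k l) (Imat k l)) :=
  inverse_image_dbm_general A htop g hg D'
end

section
/- Any two distinct regions R_g and R_{g'} (for finite coefficients g ≠ g' of a row-finite max-plus matrix A) have disjoint topological interiors; moreover the union ⋃_g R_g over all finite coefficients g covers ℝ^n. -/
open scoped BigOperators

/-- distinct PWA regions `R_g`, `R_{g'}` (for finite coefficients
`g ≠ g'`) have disjoint interiors, and the regions over all finite coefficients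
cover `ℝ^n`. -/
theorem regions_cover_disjoint_interiors {n : ℕ} (A : Fin n → Fin n → EReal)
    (hrow : ∀ i, ∃ j, A i j ≠ ⊥) (htop : ∀ i j, A i j ≠ ⊤) :
    (∀ g g' : Fin n → Fin n, (∀ i, A i (g i) ≠ ⊥) → (∀ i, A i (g' i) ≠ ⊥) → g ≠ g' →
      interior {x : Fin n → ℝ | ∀ i j, A i j - A i (g i) ≤ ((x (g i) - x j : ℝ) : EReal)} ∩
        interior {x : Fin n → ℝ | ∀ i j, A i j - A i (g' i) ≤ ((x (g' i) - x j : ℝ) : EReal)}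
          = ∅) ∧
    (⋃ g ∈ {g : Fin n → Fin n | ∀ i, A i (g i) ≠ ⊥},
        {x : Fin n → ℝ | ∀ i j, A i j - A i (g i) ≤ ((x (g i) - x j : ℝ) : EReal)})
      = Set.univ := by
  constructor
  · intro g g' hg hg' hne
    ext x
    simp only [Set.mem_inter_iff, Set.mem_empty_iff_false, iff_false, not_and]
    intro hx1 hx2
    obtain ⟨i, hi⟩ := Function.ne_iff.mp hne
    obtain ⟨ε, hε, hball⟩ := Metric.mem_nhds_iff.mp (mem_interior_iff_mem_nhds.mp hx1)
    set y : Fin n → ℝ := Function.update x (g' i) (x (g' i) + ε / 2) with hy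
    have hymem : y ∈ Metric.ball x ε := by
      rw [Metric.mem_ball, dist_pi_lt_iff hε]
      intro b
      by_cases hb : b = g' i
      · subst hb
        simp [hy, Real.dist_eq, abs_of_nonneg, hε.le]
        linarith
      · simp [hy, Function.update_of_ne hb]
        exact hε
    have hy1 := hball hymem
    have hx2' := interior_subset hx2
    -- lift the relevant entries to ℝ
    set a := (A i (g i)).toReal with ha
    set b := (A i (g' i)).toReal with hb
    have haA : ((a : ℝ) : EReal) = A i (g i) := EReal.coe_toReal (htop _ _) (hg i)
    have hbA : ((b : ℝ) : EReal) = A i (g' i) := EReal.coe_toReal (htop _ _) (hg' i)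
    have h1 := hy1 i (g' i)
    have h2 := hx2' i (g i)
    rw [← haA, ← hbA] at h1 h2
    rw [← EReal.coe_sub, EReal.coe_le_coe_iff] at h1 h2
    have hyg : y (g i) = x (g i) := Function.update_of_ne hi _ _
    have hyg' : y (g' i) = x (g' i) + ε / 2 := Function.update_self _ _ _
    rw [hyg, hyg'] at h1
    linarith
  · rw [Set.eq_univ_iff_forall]
    intro x
    have key : ∀ i : Fin n, ∃ j, (∀ k, A i k + (x k : EReal) ≤ A i j + (x j : EReal))
        ∧ A i j ≠ ⊥ := by
      intro i
      obtain ⟨j, -, hj⟩ := Finset.exists_max_image Finset.univ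
        (fun k => A i k + (x k : EReal)) ⟨i, Finset.mem_univ i⟩
      refine ⟨j, fun k => hj k (Finset.mem_univ k), ?_⟩
      intro hbot
      obtain ⟨j₀, hj₀⟩ := hrow i
      have h := hj j₀ (Finset.mem_univ j₀)
      rw [hbot, EReal.bot_add] at h
      have : A i j₀ + (x j₀ : EReal) = ⊥ := le_bot_iff.mp h
      exact hj₀ (by
        rcases EReal.add_eq_bot_iff.mp this with h' | h'
        · exact h'
        · exact absurd h' (EReal.coe_ne_bot _))
    choose g hg hgbot using key
    refine Set.mem_iUnion₂.mpr ⟨g, hgbot, ?_⟩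
    intro i j
    by_cases hbot : A i j = ⊥
    · rw [hbot, EReal.bot_sub]
      exact bot_le
    · have haA : (((A i j).toReal : ℝ) : EReal) = A i j :=
        EReal.coe_toReal (htop _ _) hbot
      have hbA : (((A i (g i)).toReal : ℝ) : EReal) = A i (g i) :=
        EReal.coe_toReal (htop _ _) (hgbot i)
      have h := hg i j
      rw [← haA, ← hbA] at h ⊢
      rw [← EReal.coe_add, ← EReal.coe_add, EReal.coe_le_coe_iff] at h
      rw [← EReal.coe_sub, EReal.coe_le_coe_iff]
      linarith
end

section
/- For x ∈ ℝ^n and a row-finite max-plus matrix A, the max-plus orbit x(k+1) = A ⊗ x(k) with x(0) = x satisfies: for every k there exists a finite coefficient g^{(k)} such that x(k) ∈ R_{g^{(k)}} and x(k+1) = A_{g^{(k)}} ⊗ x(k). Consequently x(k) = A_{g^{(k-1)}} ⊗ ⋯ ⊗ A_{g^{(0)}} ⊗ x(0), i.e. every trajectory of the MPL system is a trajectory of the induced piecewise-affine system. -/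
open scoped BigOperators

/-! A step of the orbit is `x(k+1)_i = max_j (A(i,j) + x(k)_j)`, a maximum of finitely many
terms; choosing `g i` to be an index where row `i` attains it gives `A ⊗ x(k) = A_g ⊗ x(k)`.
Since `x(k+1)_i` is real, the attained term is finite, so `A(i, g i)` is real, and subtracting
it from `A(i,j) + x(k)_j ≤ A(i, g i) + x(k)_{g i}` gives the inequalities defining `R_g`. -/

namespace EReal

lemma eq_coe_sub_of_coe_eq_add {a : EReal} {r y : ℝ} (h : (r : EReal) = a + y) :
    a = ((r - y : ℝ) : EReal) := by
  rw [coe_sub, h, add_sub_cancel_right]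

lemma sub_coe_le_coe_sub_of_add_coe_le {a : EReal} {b c d : ℝ}
    (h : a + c ≤ ((b + d : ℝ) : EReal)) : a - b ≤ ((d - c : ℝ) : EReal) := by
  apply sub_le_of_le_add
  have h' : a ≤ ((b + d : ℝ) : EReal) - c :=
    (le_sub_iff_add_le (.inl (coe_ne_bot c)) (.inl (coe_ne_top c))).2 h
  convert h' using 1
  rw [← coe_sub, ← coe_add]
  congr 1
  ring

end EReal

lemma exists_argmax_of_coe_eq_iSup_add {κ : Type*} [Finite κ] (a : κ → EReal) (y : κ → ℝ)
    {r : ℝ} (hr : (r : EReal) = ⨆ j, a j + y j) :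
    ∃ g, a g ≠ ⊥ ∧ (∀ j, a j - a g ≤ ((y g - y j : ℝ) : EReal)) ∧ (r : EReal) = a g + y g := by
  have : Nonempty κ := by
    refine not_isEmpty_iff.1 fun _ => EReal.coe_ne_bot r ?_
    rwa [iSup_of_empty] at hr
  obtain ⟨g, hg⟩ := exists_eq_ciSup_of_finite (f := fun j => a j + y j)
  have hrg : (r : EReal) = a g + y g := hr.trans hg.symm
  have hag : a g = ((r - y g : ℝ) : EReal) := EReal.eq_coe_sub_of_coe_eq_add hrg
  refine ⟨g, hag ▸ EReal.coe_ne_bot _, fun j => ?_, hrg⟩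
  rw [hag]
  apply EReal.sub_coe_le_coe_sub_of_add_coe_le
  calc a j + y j ≤ ⨆ j, a j + y j := le_iSup (fun j => a j + y j) j
    _ = r := hr.symm
    _ = ((r - y g + y g : ℝ) : EReal) := by rw [sub_add_cancel]

theorem mpl_orbit_is_pwa_orbit_general {n : ℕ} (A : Fin n → Fin n → EReal)
    (x : ℕ → Fin n → ℝ)
    (hx : ∀ k i, ((x (k+1) i : ℝ) : EReal) = ⨆ j, A i j + (x k j : EReal)) :
    ∃ gs : ℕ → Fin n → Fin n, ∀ k,
      (∀ i, A i (gs k i) ≠ ⊥) ∧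
      (∀ i j, A i j - A i (gs k i) ≤ ((x k (gs k i) - x k j : ℝ) : EReal)) ∧
      (∀ i, ((x (k+1) i : ℝ) : EReal) = A i (gs k i) + (x k (gs k i) : EReal)) := by
  choose gs hgs using fun k i => exists_argmax_of_coe_eq_iSup_add (A i) (x k) (hx k i)
  exact ⟨gs, fun k => ⟨fun i => (hgs k i).1, fun i => (hgs k i).2.1, fun i => (hgs k i).2.2⟩⟩

/-- every trajectory of the MPL system `x(k+1) = A ⊗ x(k)` is a
trajectory of the induced PWA system: at each step `k` there is a finite coefficient
`gs k` with `x(k) ∈ R_{gs k}` and `x(k+1) = A_{gs k} ⊗ x(k)`. -/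
theorem mpl_orbit_is_pwa_orbit {n : ℕ} (A : Fin n → Fin n → EReal)
    (hrow : ∀ i, ∃ j, A i j ≠ ⊥) (htop : ∀ i j, A i j ≠ ⊤)
    (x : ℕ → Fin n → ℝ)
    (hx : ∀ k i, ((x (k+1) i : ℝ) : EReal) = ⨆ j, A i j + (x k j : EReal)) :
    ∃ gs : ℕ → Fin n → Fin n, ∀ k,
      (∀ i, A i (gs k i) ≠ ⊥) ∧
      (∀ i j, A i j - A i (gs k i) ≤ ((x k (gs k i) - x k j : ℝ) : EReal)) ∧
      (∀ i, ((x (k+1) i : ℝ) : EReal) = A i (gs k i) + (x k (gs k i) : EReal)) :=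
  mpl_orbit_is_pwa_orbit_general A x hx
end

section
/- Let D be an (n+1)×(n+1) DBM whose canonical form cf(D) = ⊕_{m=0}^{n+1} D^{⊗m} has all diagonal entries equal to 0 (no positive cycles). Then the represented set {x : x_0 = 0, x_i - x_j ≥ D(i,j) ∀ i,j} is nonempty; in particular the vector x defined by x_i = cf(D)(i, 0) belongs to it. -/
/-!
`cf(D)(i, 0)` is the longest-walk weight from `0` to `i`. Without positive cycles, cutting
repeated vertices out of walks shows that `cf(D)` dominates every max-plus power of `D`, so
`D i j + cf(D)(j, 0) ≤ cf(D)(i, 0)`: the potentials satisfy every constraint of the DBM.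
-/

open scoped BigOperators

/-- Max-plus power of a square matrix. -/
noncomputable def mpow {n : ℕ} (D : Fin n → Fin n → EReal) : ℕ → (Fin n → Fin n → EReal)
  | 0 => Imat
  | m + 1 => mmul D (mpow D m)

/-- `cf(D) = ⊕_{m=0}^{n+1} D^{⊗m}`. -/
noncomputable def cfm {n : ℕ} (D : Fin (n+1) → Fin (n+1) → EReal) :
    Fin (n+1) → Fin (n+1) → EReal :=
  fun i j => ⨆ m : Fin (n+2), mpow D (m : ℕ) i j

open Finset

section Paths

variable {α : Type*} (D : α → α → EReal)

/-- Walks are read backwards, from `p m` to `p 0`, so that edge weights `D (p e) (p (e + 1))`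
compose like `mmul`. -/
noncomputable def pathWeight (p : ℕ → α) (m : ℕ) : EReal :=
  ∑ e ∈ range m, D (p e) (p (e + 1))

lemma pathWeight_succ (p : ℕ → α) (m : ℕ) :
    pathWeight D p (m + 1) = D (p 0) (p 1) + pathWeight D (fun t => p (t + 1)) m := by
  rw [pathWeight, sum_range_succ', add_comm]
  rfl

lemma pathWeight_add (p : ℕ → α) (a b : ℕ) :
    pathWeight D p (a + b) = pathWeight D p a + pathWeight D (fun t => p (a + t)) b := by
  rw [pathWeight, sum_range_add]
  rfl

def cutSubwalk (p : ℕ → α) (a c : ℕ) : ℕ → α :=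
  fun t => if t ≤ a then p t else p (t + c)

lemma pathWeight_eq_cutSubwalk_add {p : ℕ → α} {a c : ℕ} (hp : p (a + c) = p a) (r : ℕ) :
    pathWeight D p (a + (c + r)) =
      pathWeight D (cutSubwalk p a c) (a + r) + pathWeight D (fun t => p (a + t)) c := by
  have hprefix : pathWeight D (cutSubwalk p a c) a = pathWeight D p a :=
    sum_congr rfl fun e he => by
      have he : e < a := mem_range.mp he
      simp only [cutSubwalk, if_pos he.le, if_pos (Nat.succ_le_of_lt he)]
  have hsuffix : (fun t => cutSubwalk p a c (a + t)) = fun t => p (a + (c + t)) := by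
    funext t
    rcases Nat.eq_zero_or_pos t with rfl | ht
    · simp [cutSubwalk, hp]
    · simp only [cutSubwalk, if_neg (show ¬ a + t ≤ a by omega)]
      congr 1
      omega
  rw [pathWeight_add, pathWeight_add _ (fun t => p (a + t)), pathWeight_add, hprefix, hsuffix]
  ac_rfl

end Paths

section Powers

variable {n : ℕ} (D : Fin n → Fin n → EReal)

lemma pathWeight_le_mpow {p : ℕ → Fin n} {m : ℕ} {i j : Fin n} (hi : p 0 = i) (hj : p m = j) :
    pathWeight D p m ≤ mpow D m i j := by
  induction m generalizing p i with
  | zero => simp [pathWeight, mpow, Imat, ← hi, ← hj]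
  | succ m ih =>
    rw [pathWeight_succ, ← hi]
    calc D (p 0) (p 1) + pathWeight D (fun t => p (t + 1)) m
        ≤ D (p 0) (p 1) + mpow D m (p 1) j := by gcongr; exact ih rfl hj
      _ ≤ mpow D (m + 1) (p 0) j := le_iSup (fun k => D (p 0) k + mpow D m k j) (p 1)

lemma exists_pathWeight_eq_mpow {m : ℕ} {i j : Fin n} (h : mpow D m i j ≠ ⊥) :
    ∃ p : ℕ → Fin n, p 0 = i ∧ p m = j ∧ pathWeight D p m = mpow D m i j := by
  induction m generalizing i with
  | zero =>
    have hij : i = j := by by_contra hij; simp [mpow, Imat, hij] at h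
    exact ⟨fun _ => i, rfl, hij, by simp [pathWeight, mpow, Imat, hij]⟩
  | succ m ih =>
    have : Nonempty (Fin n) := ⟨i⟩
    obtain ⟨k, hk⟩ := exists_eq_ciSup_of_finite (f := fun k => D i k + mpow D m k j)
    change _ = mpow D (m + 1) i j at hk
    have hkj : mpow D m k j ≠ ⊥ := fun hbot => h (by rw [← hk, hbot, EReal.add_bot])
    obtain ⟨p, hp0, hpm, hpw⟩ := ih hkj
    refine ⟨fun t => if t = 0 then i else p (t - 1), rfl, by simpa using hpm, ?_⟩
    rw [pathWeight_succ, ← hk, ← hpw, ← hp0]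
    rfl

lemma mpow_ne_top (htop : ∀ i j, D i j ≠ ⊤) (m : ℕ) (i j : Fin n) : mpow D m i j ≠ ⊤ := by
  induction m generalizing i with
  | zero => by_cases hij : i = j <;> simp [mpow, Imat, hij]
  | succ m ih =>
    have : Nonempty (Fin n) := ⟨i⟩
    obtain ⟨k, hk⟩ := exists_eq_ciSup_of_finite (f := fun k => D i k + mpow D m k j)
    change _ = mpow D (m + 1) i j at hk
    exact hk ▸ (EReal.add_lt_top (htop i k) (ih k)).ne

end Powers

section CanonicalForm

variable {n : ℕ} (D : Fin (n + 1) → Fin (n + 1) → EReal)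

lemma mpow_le_cfm_of_le {m : ℕ} (hm : m ≤ n + 1) (i j : Fin (n + 1)) :
    mpow D m i j ≤ cfm D i j :=
  le_iSup (fun t : Fin (n + 2) => mpow D t i j) ⟨m, by omega⟩

lemma exists_mpow_eq_cfm (i j : Fin (n + 1)) : ∃ m, mpow D m i j = cfm D i j := by
  obtain ⟨m, hm⟩ := exists_eq_ciSup_of_finite (f := fun t : Fin (n + 2) => mpow D t i j)
  exact ⟨m, hm⟩

lemma cfm_ne_top (htop : ∀ i j, D i j ≠ ⊤) (i j : Fin (n + 1)) : cfm D i j ≠ ⊤ := by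
  obtain ⟨m, hm⟩ := exists_mpow_eq_cfm D i j
  exact hm ▸ mpow_ne_top D htop m i j

lemma exists_lt_apply_eq (p : ℕ → Fin (n + 1)) : ∃ a b, a < b ∧ b ≤ n + 1 ∧ p a = p b := by
  obtain ⟨a, b, hne, heq⟩ :=
    Fintype.exists_ne_map_eq_of_card_lt (fun t : Fin (n + 2) => p t) (by simp)
  rcases Fin.lt_or_lt_of_ne hne with hab | hba
  · exact ⟨a, b, hab, Nat.lt_succ_iff.mp b.isLt, heq⟩
  · exact ⟨b, a, hba, Nat.lt_succ_iff.mp a.isLt, heq.symm⟩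

/-- A walk of length at least `n + 2` repeats a vertex `k`, and the closed subwalk at `k` weighs
at most `cf(D)(k, k) = 0`, so cutting it out gives a shorter walk at least as heavy. -/
lemma mpow_le_cfm (hdiag : ∀ k, cfm D k k = 0) (m : ℕ) (i j : Fin (n + 1)) :
    mpow D m i j ≤ cfm D i j := by
  induction m using Nat.strong_induction_on generalizing i with
  | _ m ih =>
  rcases le_or_gt m (n + 1) with hm | hm
  · exact mpow_le_cfm_of_le D hm i j
  rcases eq_or_ne (mpow D m i j) ⊥ with hbot | hfin
  · exact hbot ▸ bot_le
  obtain ⟨p, hp0, hpm, hpw⟩ := exists_pathWeight_eq_mpow D hfin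
  obtain ⟨a, b, hab, hb, hpab⟩ := exists_lt_apply_eq p
  obtain ⟨c, rfl⟩ : ∃ c, b = a + c := ⟨b - a, by omega⟩
  obtain ⟨r, rfl⟩ : ∃ r, m = a + (c + r) := ⟨m - (a + c), by omega⟩
  have hcycle : pathWeight D (fun t => p (a + t)) c ≤ 0 :=
    calc pathWeight D (fun t => p (a + t)) c
        ≤ mpow D c (p a) (p a) := pathWeight_le_mpow D (by simp) hpab.symm
      _ ≤ cfm D (p a) (p a) := mpow_le_cfm_of_le D (by omega) _ _
      _ = 0 := hdiag _
  have hshort : pathWeight D (cutSubwalk p a c) (a + r) ≤ mpow D (a + r) i j := by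
    refine pathWeight_le_mpow D (by simp [cutSubwalk, hp0]) ?_
    rcases Nat.eq_zero_or_pos r with rfl | hr
    · omega
    · simpa [cutSubwalk, show ¬ a + r ≤ a by omega, show a + r + c = a + (c + r) by omega] using hpm
  calc mpow D (a + (c + r)) i j
      = pathWeight D (cutSubwalk p a c) (a + r) + pathWeight D (fun t => p (a + t)) c := by
        rw [← hpw, pathWeight_eq_cutSubwalk_add D hpab.symm]
    _ ≤ mpow D (a + r) i j + 0 := add_le_add hshort hcycle
    _ ≤ cfm D i j := by rw [add_zero]; exact ih _ (by omega) i

lemma add_cfm_le_cfm (hdiag : ∀ k, cfm D k k = 0) (i j k : Fin (n + 1)) :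
    D i j + cfm D j k ≤ cfm D i k := by
  obtain ⟨m, hm⟩ := exists_mpow_eq_cfm D j k
  calc D i j + cfm D j k = D i j + mpow D m j k := by rw [hm]
    _ ≤ mpow D (m + 1) i k := le_iSup (fun l => D i l + mpow D m l k) j
    _ ≤ cfm D i k := mpow_le_cfm D hdiag _ i k

end CanonicalForm

lemma mem_dbmSet_iff {n : ℕ} {D : Fin n → Fin n → EReal} {x : Fin n → ℝ} :
    x ∈ dbmSet D ↔ ∀ i j, D i j + x j ≤ x i := by
  change (∀ i j, D i j ≤ ((x i - x j : ℝ) : EReal)) ↔ _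
  simp only [EReal.coe_sub]
  exact forall₂_congr fun i j =>
    EReal.le_sub_iff_add_le (Or.inl (EReal.coe_ne_bot _)) (Or.inl (EReal.coe_ne_top _))

/-- if the canonical form `cf(D)` of a DBM has zero diagonal
(no positive cycles) and finite longest-path potentials from node 0, then the
represented set (with `x 0 = 0`) is nonempty, witnessed by `x i = cf(D)(i,0)`. -/
theorem dbm_nonempty_of_zero_diagonal {n : ℕ} (D : Fin (n+1) → Fin (n+1) → EReal)
    (htop : ∀ i j, D i j ≠ ⊤)
    (hdiag : ∀ i, cfm D i i = 0)
    (hfin : ∀ i, cfm D i 0 ≠ ⊥) :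
    ∃ x : Fin (n+1) → ℝ, (∀ i, (x i : EReal) = cfm D i 0) ∧ x 0 = 0 ∧
      ∀ i j, D i j ≤ ((x i - x j : ℝ) : EReal) := by
  have hx : ∀ i, ((cfm D i 0).toReal : EReal) = cfm D i 0 :=
    fun i => EReal.coe_toReal (cfm_ne_top D htop i 0) (hfin i)
  refine ⟨fun i => (cfm D i 0).toReal, hx, by simp [hdiag 0], ?_⟩
  refine mem_dbmSet_iff.mpr fun i j => ?_
  rw [hx, hx]
  exact add_cfm_le_cfm D hdiag i j 0
end
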